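/- In the recursive sink-removal decomposition, repeatedly selecting and removing a best sink from V produces an ordering (s_1, ..., s_p) such that the DAG assigning each s_i the best-scoring parent set within {s_1,...,s_{i-1}} (subject to the constraints) achieves bestScore(V). -/

import Mathlib

/-- `G` is a DAG on the node set `U`. -/
def DAGon {α : Type*} [DecidableEq α] (U : Finset α) (G : α → Finset α) : Prop :=
  (∀ v ∈ U, G v ⊆ U.erase v) ∧ (∀ v ∉ U, G v = ∅) ∧
    ∀ v, ¬ Relation.TransGen (fun u w : α => u ∈ G w) v v

/-- Best (supremum) score over all DAGs on `U`. -/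
noncomputable def bestScore {α : Type*} [DecidableEq α]
    (localscore : α → Finset α → ℝ) (U : Finset α) : ℝ :=
  sSup {x : ℝ | ∃ G : α → Finset α, DAGon U G ∧ x = ∑ v ∈ U, localscore v (G v)}

/-- `s` is a best sink of `U`. -/
def IsBestSink {α : Type*} [DecidableEq α] (localscore : α → Finset α → ℝ)
    (U : Finset α) (s : α) : Prop :=
  s ∈ U ∧ ∀ t ∈ U,
    bestScore localscore (U.erase t) +
        (U.erase t).powerset.sup' ⟨∅, Finset.empty_mem_powerset _⟩ (localscore t) ≤
      bestScore localscore (U.erase s) +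
        (U.erase s).powerset.sup' ⟨∅, Finset.empty_mem_powerset _⟩ (localscore s)

/-!
Removing a sink `t` from a DAG on `U` leaves a DAG on `U \ {t}`, and `t`'s parents lie in
`U \ {t}`; conversely a DAG on `U \ {a}` extends to `U` by adding `a` with any parents in
`U \ {a}`. Hence `bestScore U = max_t (bestScore (U \ {t}) + max_{g ⊆ U \ {t}} localscore t g)`,
the maximum being attained at a best sink. Along the ordering, each `s_i` is a best sink of
`{s_1, …, s_i}` and gets a best parent set in `{s_1, …, s_{i-1}}`, so by induction on `i` the
DAG restricted to `{s_1, …, s_i}` scores `bestScore {s_1, …, s_i}`.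
-/

section BestScore

open Finset Relation

variable {α : Type*} (localscore : α → Finset α → ℝ)

noncomputable def bestLocalScore (U : Finset α) (v : α) : ℝ :=
  U.powerset.sup' ⟨∅, empty_mem_powerset _⟩ (localscore v)

theorem exists_bestLocalScore_eq (U : Finset α) (v : α) :
    ∃ g ⊆ U, localscore v g = bestLocalScore localscore U v := by
  obtain ⟨g, hg, hmax⟩ := U.powerset.exists_mem_eq_sup' ⟨∅, empty_mem_powerset _⟩ (localscore v)
  exact ⟨g, mem_powerset.1 hg, hmax.symm⟩

theorem localscore_le_bestLocalScore {U g : Finset α} (hg : g ⊆ U) (v : α) :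
    localscore v g ≤ bestLocalScore localscore U v :=
  le_sup' (localscore v) (mem_powerset.2 hg)

variable [DecidableEq α]

namespace DAGon

variable {U : Finset α} {G : α → Finset α}

theorem exists_sink (hG : DAGon U G) (hU : U.Nonempty) : ∃ t ∈ U, ∀ w, t ∉ G w := by
  classical
  obtain ⟨-, hout, hacyc⟩ := hG
  let ancestors (t : α) : Finset α := U.filter fun u => TransGen (fun u w => u ∈ G w) u t
  -- a node with the most ancestors has no child: a child would have strictly more
  obtain ⟨t, htU, hmax⟩ := U.exists_max_image (fun t => (ancestors t).card) hU
  refine ⟨t, htU, fun w htw => ?_⟩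
  have hwU : w ∈ U := by
    by_contra hw
    simp [hout w hw] at htw
  have hlt : ancestors t ⊂ ancestors w := by
    refine (ssubset_iff_of_subset fun u hu => ?_).2 ⟨t, ?_, ?_⟩
    · simp only [ancestors, mem_filter] at hu ⊢
      exact ⟨hu.1, hu.2.tail htw⟩
    · simpa [ancestors] using ⟨htU, TransGen.single htw⟩
    · simpa [ancestors] using fun _ => hacyc t
  exact (hmax w hwU).not_gt (card_lt_card hlt)

theorem erase_sink (hG : DAGon U G) {t : α} (ht : ∀ w, t ∉ G w) :
    DAGon (U.erase t) (Function.update G t ∅) := by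
  obtain ⟨hsub, hout, hacyc⟩ := hG
  have hle : ∀ v, Function.update G t ∅ v ⊆ G v := fun v => by
    rcases eq_or_ne v t with rfl | hv
    · simp
    · simp [hv]
  refine ⟨fun v hv => ?_, fun v hv => ?_, fun v hcyc => ?_⟩
  · rw [Function.update_of_ne (ne_of_mem_erase hv)]
    intro u hu
    have hu' := hsub v (mem_of_mem_erase hv) hu
    exact mem_erase.2 ⟨ne_of_mem_erase hu', mem_erase.2
      ⟨fun h => ht v (h ▸ hu), mem_of_mem_erase hu'⟩⟩
  · rcases eq_or_ne v t with rfl | hvt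
    · simp
    · rw [Function.update_of_ne hvt, hout v fun h => hv (mem_erase.2 ⟨hvt, h⟩)]
  · exact hacyc v (TransGen.mono (fun u w h => hle w h) _ _ hcyc)

theorem update_insert (hG : DAGon U G) {a : α} (ha : a ∉ U) {g : Finset α} (hg : g ⊆ U) :
    DAGon (insert a U) (Function.update G a g) := by
  obtain ⟨hsub, hout, hacyc⟩ := hG
  set G' := Function.update G a g
  have hGU : ∀ w, G w ⊆ U := fun w => by
    by_cases hw : w ∈ U
    · exact (hsub w hw).trans (erase_subset _ _)
    · simp [hout w hw]
  have ha_src : ∀ w, a ∉ G' w := fun w => by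
    rcases eq_or_ne w a with rfl | hw
    · simpa [G'] using fun h => ha (hg h)
    · simpa [G', hw] using fun h => ha (hGU w h)
  -- a path of `G'` not ending at the new sink `a` is a path of `G`
  have hpath : ∀ {u w}, TransGen (fun u w => u ∈ G' w) u w → w ≠ a →
      TransGen (fun u w => u ∈ G w) u w := by
    intro u w h
    induction h with
    | single h => intro hw; exact .single (by simpa [G', hw] using h)
    | tail _ hxw ih =>
      intro hw
      exact (ih fun hx => ha_src _ (hx ▸ hxw)).tail (by simpa [G', hw] using hxw)
  refine ⟨fun v hv => ?_, fun v hv => ?_, fun v hcyc => ?_⟩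
  · rcases eq_or_ne v a with rfl | hva
    · simp only [G', Function.update_self]
      exact fun u hu => mem_erase.2 ⟨fun h => ha (h ▸ hg hu), mem_insert_of_mem (hg hu)⟩
    · simp only [G', Function.update_of_ne hva]
      have hvU := (mem_insert.1 hv).resolve_left hva
      exact (hsub v hvU).trans (erase_subset_erase _ (subset_insert _ _))
  · rw [mem_insert, not_or] at hv
    simp [G', hv.1, hout v hv.2]
  · rcases eq_or_ne v a with rfl | hva
    · obtain ⟨w, hw, -⟩ := TransGen.head'_iff.1 hcyc
      exact ha_src w hw
    · exact hacyc v (hpath hcyc hva)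

end DAGon

def dagScores (U : Finset α) : Set ℝ :=
  {x : ℝ | ∃ G : α → Finset α, DAGon U G ∧ x = ∑ v ∈ U, localscore v (G v)}

theorem dagOn_const_empty (U : Finset α) : DAGon U fun _ => (∅ : Finset α) :=
  ⟨fun _ _ => empty_subset _, fun _ _ => rfl, fun _ h => by
    simpa using TransGen.head'_iff.1 h⟩

-- a score only depends on the parent sets of the nodes of `U`, which are subsets of `U`
theorem dagScores_finite (U : Finset α) : (dagScores localscore U).Finite := by
  refine ((U.pi fun _ => U.powerset).image
    fun f => ∑ v ∈ U.attach, localscore v (f v v.2)).finite_toSet.subset ?_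
  rintro x ⟨G, ⟨hsub, -, -⟩, rfl⟩
  simp only [coe_image, Set.mem_image, mem_coe, mem_pi]
  exact ⟨fun v _ => G v, fun v hv => mem_powerset.2 ((hsub v hv).trans (erase_subset _ _)),
    sum_attach U fun v => localscore v (G v)⟩

theorem exists_dagOn_sum_eq_bestScore (U : Finset α) :
    ∃ G, DAGon U G ∧ ∑ v ∈ U, localscore v (G v) = bestScore localscore U := by
  obtain ⟨G, hG, hsum⟩ : bestScore localscore U ∈ dagScores localscore U :=
    Set.Nonempty.csSup_mem ⟨_, _, dagOn_const_empty U, rfl⟩ (dagScores_finite localscore U)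
  exact ⟨G, hG, hsum.symm⟩

theorem sum_le_bestScore {U : Finset α} {G : α → Finset α} (hG : DAGon U G) :
    ∑ v ∈ U, localscore v (G v) ≤ bestScore localscore U :=
  le_csSup (dagScores_finite localscore U).bddAbove ⟨G, hG, rfl⟩

theorem bestScore_empty : bestScore localscore (∅ : Finset α) = 0 := by
  obtain ⟨G, -, hG⟩ := exists_dagOn_sum_eq_bestScore localscore (∅ : Finset α)
  simpa using hG.symm

theorem bestScore_le_of_forall_erase_add_le {U : Finset α} (hU : U.Nonempty) {c : ℝ}
    (hc : ∀ t ∈ U, bestScore localscore (U.erase t) + bestLocalScore localscore (U.erase t) t ≤ c) :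
    bestScore localscore U ≤ c := by
  obtain ⟨G, hG, hsum⟩ := exists_dagOn_sum_eq_bestScore localscore U
  obtain ⟨t, htU, ht⟩ := hG.exists_sink hU
  have hrest : ∑ v ∈ U.erase t, localscore v (G v) ≤ bestScore localscore (U.erase t) := by
    calc ∑ v ∈ U.erase t, localscore v (G v)
        = ∑ v ∈ U.erase t, localscore v (Function.update G t ∅ v) :=
          sum_congr rfl fun v hv => by rw [Function.update_of_ne (ne_of_mem_erase hv)]
      _ ≤ bestScore localscore (U.erase t) := sum_le_bestScore localscore (hG.erase_sink ht)
  calc bestScore localscore U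
      = ∑ v ∈ U.erase t, localscore v (G v) + localscore t (G t) := by
        rw [← hsum, ← add_sum_erase U (fun v => localscore v (G v)) htU, add_comm]
    _ ≤ bestScore localscore (U.erase t) + bestLocalScore localscore (U.erase t) t :=
        add_le_add hrest (localscore_le_bestLocalScore localscore (hG.1 t htU) t)
    _ ≤ c := hc t htU

theorem bestScore_erase_add_bestLocalScore_le {U : Finset α} {a : α} (ha : a ∈ U) :
    bestScore localscore (U.erase a) + bestLocalScore localscore (U.erase a) a ≤
      bestScore localscore U := by
  obtain ⟨G, hG, hsum⟩ := exists_dagOn_sum_eq_bestScore localscore (U.erase a)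
  obtain ⟨g, hg, hgmax⟩ := exists_bestLocalScore_eq localscore (U.erase a) a
  have hdag := hG.update_insert (notMem_erase a U) hg
  rw [insert_erase ha] at hdag
  calc bestScore localscore (U.erase a) + bestLocalScore localscore (U.erase a) a
      = ∑ v ∈ U, localscore v (Function.update G a g v) := by
        rw [← add_sum_erase U _ ha, Function.update_self,
          sum_congr rfl fun v hv => by rw [Function.update_of_ne (ne_of_mem_erase hv)],
          hsum, hgmax, add_comm]
    _ ≤ bestScore localscore U := sum_le_bestScore localscore hdag

theorem bestScore_eq_of_isBestSink {U : Finset α} {a : α} (ha : IsBestSink localscore U a) :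
    bestScore localscore U =
      bestScore localscore (U.erase a) + bestLocalScore localscore (U.erase a) a :=
  (bestScore_le_of_forall_erase_add_le localscore ⟨a, ha.1⟩ ha.2).antisymm
    (bestScore_erase_add_bestLocalScore_le localscore ha.1)

theorem sum_take_eq_bestScore {l : List α} (hnd : l.Nodup)
    (hsinks : ∀ i (hi : i < l.length), IsBestSink localscore (l.take (i + 1)).toFinset l[i])
    {G : α → Finset α}
    (hG : ∀ i (hi : i < l.length),
      localscore l[i] (G l[i]) = bestLocalScore localscore (l.take i).toFinset l[i]) :
    ∀ n ≤ l.length, ∑ v ∈ (l.take n).toFinset, localscore v (G v) =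
      bestScore localscore (l.take n).toFinset := by
  intro n hn
  induction n with
  | zero => simp [bestScore_empty]
  | succ n ih =>
    have hnew : l[n] ∉ (l.take n).toFinset := by
      have hnd' := hnd.sublist (List.take_sublist (n + 1) l)
      rw [List.take_succ_eq_append_getElem hn, List.nodup_append] at hnd'
      exact fun hmem => hnd'.2.2 _ (List.mem_toFinset.1 hmem) _ (List.mem_singleton_self _) rfl
    have htake : (l.take (n + 1)).toFinset = insert l[n] (l.take n).toFinset := by
      rw [List.take_succ_eq_append_getElem hn, List.toFinset_append, union_comm]; rfl
    have hsink := hsinks n hn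
    rw [htake] at hsink ⊢
    rw [bestScore_eq_of_isBestSink localscore hsink, erase_insert hnew, sum_insert hnew,
      ih (by omega), hG n hn, add_comm]

end BestScore

theorem stmt_16 {α : Type*} [DecidableEq α] (localscore : α → Finset α → ℝ)
    (V : Finset α) (l : List α) (hnd : l.Nodup) (hall : l.toFinset = V)
    -- each `s_i` is a best sink of the set `{s_1, ..., s_i}`
    (hsinks : ∀ i (hi : i < l.length),
      IsBestSink localscore (l.take (i + 1)).toFinset (l.get ⟨i, hi⟩))
    (G : α → Finset α)
    -- `G` assigns to each `s_i` a best-scoring parent set within `{s_1, ..., s_{i-1}}`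
    (hG : ∀ i (hi : i < l.length),
      G (l.get ⟨i, hi⟩) ⊆ (l.take i).toFinset ∧
        localscore (l.get ⟨i, hi⟩) (G (l.get ⟨i, hi⟩)) =
          ((l.take i).toFinset.powerset).sup' ⟨∅, Finset.empty_mem_powerset _⟩
            (localscore (l.get ⟨i, hi⟩))) :
    ∑ v ∈ V, localscore v (G v) = bestScore localscore V := by
  subst hall
  simpa using sum_take_eq_bestScore localscore hnd hsinks
    (fun i hi => (hG i hi).2) l.length le_rfl
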